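/- The screewidth of the icosahedron graph is at most 8. -/

import Mathlib

open Finset

/-- A finite loopless multigraph on a vertex type `V`, given by a symmetric
edge-multiplicity function with zero diagonal. -/
structure Multigraph (V : Type) [Fintype V] [DecidableEq V] where
  m : V → V → ℕ
  symm : ∀ u v, m u v = m v u
  loopless : ∀ v, m v v = 0

namespace Multigraph

variable {V : Type} [Fintype V] [DecidableEq V] (G : Multigraph V)

/-- The underlying simple graph: adjacent iff joined by at least one edge. -/
def toSimpleGraph : SimpleGraph V where
  Adj u v := 0 < G.m u v
  symm := by
    constructor
    intro u v h
    rw [G.symm v u]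
    exact h
  loopless := by
    constructor
    intro v h
    rw [G.loopless v] at h
    exact lt_irrefl 0 h

/-- A multigraph is connected if its underlying simple graph is. -/
def Connected : Prop := G.toSimpleGraph.Connected

/-- The valence of a vertex: the number of edges incident to it. -/
def val (v : V) : ℕ := ∑ w, G.m v w

end Multigraph

/-- The degree of a divisor: the sum of its values. -/
def Divisor.deg {V : Type} [Fintype V] (D : V → ℤ) : ℤ := ∑ v, D v

/-- A divisor is effective if all its values are nonnegative. -/
def Divisor.Effective {V : Type} (D : V → ℤ) : Prop := ∀ v, 0 ≤ D v

namespace Multigraph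

variable {V : Type} [Fintype V] [DecidableEq V] (G : Multigraph V)

/-- The result of firing the vertex `v`: `v` loses its valence many chips, and
every other vertex `w` gains `m v w` chips. -/
def fire (v : V) (D : V → ℤ) : V → ℤ :=
  fun w => D w + (G.m v w : ℤ) - if w = v then (G.val v : ℤ) else 0

/-- Two divisors are equivalent if one is obtained from the other by a finite
sequence of firing moves. -/
def Equivalent (D D' : V → ℤ) : Prop :=
  Relation.ReflTransGen (fun A B => ∃ v, B = G.fire v A) D D'

/-- A divisor `D` wins the Gonality Game if for every vertex `q`, the divisor
`D - 1_q` is equivalent to an effective divisor. -/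
def Winning (D : V → ℤ) : Prop :=
  ∀ q : V, ∃ D' : V → ℤ,
    G.Equivalent (fun w => D w - if w = q then 1 else 0) D' ∧ Divisor.Effective D'

/-- The gonality of `G`: the minimum degree of an effective divisor that wins
the Gonality Game. -/
noncomputable def gonality : ℕ :=
  sInf {n : ℕ | ∃ D : V → ℤ, Divisor.Effective D ∧ G.Winning D ∧ Divisor.deg D = (n : ℤ)}

end Multigraph

/-- The multigraph associated to a simple graph: one edge for each adjacency. -/
def Multigraph.ofSimpleGraph {V : Type} [Fintype V] [DecidableEq V]
    (G : SimpleGraph V) [DecidableRel G.Adj] : Multigraph V where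
  m u v := if G.Adj u v then 1 else 0
  symm := by
    intro u v
    by_cases h : G.Adj u v
    · simp [h, h.symm]
    · have h' : ¬ G.Adj v u := fun hvu => h hvu.symm
      simp [h, h']
  loopless := by intro v; simp

namespace Multigraph

variable {V : Type} [Fintype V] [DecidableEq V] (G : Multigraph V)

open scoped Classical in
/-- Given a tree-cut decomposition `(T, b)` of `G`, the number of edges of `G`
routed through the link `{x, y}` of `T`: an edge `uv` of `G` is routed through
the link iff `b u` and `b v` are separated by deleting that link from `T`.
Each edge of `G` is counted once (the double sum counts ordered pairs). -/
noncomputable def linkCount {N : Type} (T : SimpleGraph N) (b : V → N) (x y : N) : ℕ :=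
  (∑ u : V, ∑ v : V,
    if ¬ (T.deleteEdges {s(x, y)}).Reachable (b u) (b v) then G.m u v else 0) / 2

open scoped Classical in
/-- Given a tree-cut decomposition `(T, b)` of `G`, the number of vertices of
`G` assigned to the node `n`, plus the number of edges of `G` routed through
`n` with neither endpoint assigned to `n` (an edge `uv` is routed through `n`
iff `n` lies on the path in `T` from `b u` to `b v`). -/
noncomputable def nodeCount {N : Type} (T : SimpleGraph N) (b : V → N) (n : N) : ℕ :=
  (Finset.univ.filter fun v => b v = n).card +
  (∑ u : V, ∑ v : V,
    if b u ≠ n ∧ b v ≠ n ∧ ∃ p : T.Walk (b u) (b v), p.IsPath ∧ n ∈ p.support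
    then G.m u v else 0) / 2

/-- The width of a tree-cut decomposition: the maximum over all links of the
number of edges routed through the link, and over all nodes of the number of
vertices assigned to the node plus the number of edges tunneling through it. -/
noncomputable def decompositionWidth {N : Type} (T : SimpleGraph N) (b : V → N) : ℕ :=
  sSup ({k : ℕ | ∃ x y, T.Adj x y ∧ G.linkCount T b x y = k} ∪
        {k : ℕ | ∃ n, G.nodeCount T b n = k})

/-- The screewidth of `G`: the minimum width of a tree-cut decomposition of
`G`, i.e. of a (finite) tree `T` with the vertices of `G` assigned to its
nodes. -/
noncomputable def screewidth : ℕ :=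
  sInf {k : ℕ | ∃ (r : ℕ) (T : SimpleGraph (Fin r)) (b : V → Fin r),
    T.IsTree ∧ G.decompositionWidth T b = k}

end Multigraph

/-- Edge list of the icosahedron graph: apexes `0` and `11`, an upper pentagon
`1,…,5`, a lower pentagon `6,…,10`, with an antiprism between the pentagons. -/
def icosahedronEdges : List (ℕ × ℕ) :=
  [(0,1),(0,2),(0,3),(0,4),(0,5),
   (1,2),(2,3),(3,4),(4,5),(5,1),
   (1,6),(1,7),(2,7),(2,8),(3,8),(3,9),(4,9),(4,10),(5,10),(5,6),
   (6,7),(7,8),(8,9),(9,10),(10,6),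
   (11,6),(11,7),(11,8),(11,9),(11,10)]

/-- The icosahedron graph: the 1-skeleton of the regular icosahedron, the
5-regular simple graph on 12 vertices with 30 edges. -/
def icosahedronGraph : SimpleGraph (Fin 12) where
  Adj u v := u ≠ v ∧
    ((u.val, v.val) ∈ icosahedronEdges ∨ (v.val, u.val) ∈ icosahedronEdges)
  symm := ⟨fun _ _ h => ⟨h.1.symm, h.2.symm⟩⟩
  loopless := ⟨fun _ h => h.1 rfl⟩

instance : DecidableRel icosahedronGraph.Adj :=
  fun _ _ => inferInstanceAs (Decidable (_ ∧ (_ ∨ _)))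

/-!
Take the path `0 - 1 - 2` as the tree, put the edge `{0, 1}` of the icosahedron in the bag of
node `0`, the edge `{8, 11}` in the bag of node `2`, and the remaining eight vertices in the
middle bag. Each link then carries the `5 + 5 - 2 = 8` edges leaving an end bag. Nothing can
tunnel through a leaf, and nothing tunnels through the middle node because no edge of the
icosahedron joins `{0, 1}` to `{8, 11}`; so every node counts at most its `8` vertices.
-/

open SimpleGraph

theorem SimpleGraph.IsAcyclic.notMem_support_of_reachable_induce {N : Type} {T : SimpleGraph N}
    (hT : T.IsAcyclic) {n a c : N} (ha : a ≠ n) (hc : c ≠ n)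
    (h : (T.induce {n}ᶜ).Reachable ⟨a, ha⟩ ⟨c, hc⟩) {p : T.Walk a c} (hp : p.IsPath) :
    n ∉ p.support := by
  classical
  obtain ⟨q⟩ := h
  let r : T.Walk a c := q.map (Embedding.induce _).toHom
  have hpq : p = r.bypass := congrArg Subtype.val
    ((hT.subsingleton_path a c).elim ⟨p, hp⟩ ⟨r.bypass, r.bypass_isPath⟩)
  intro hn
  rw [hpq] at hn
  obtain ⟨w, -, hw⟩ := List.mem_map.mp (Walk.support_map _ q ▸ r.support_bypass_subset_support hn)
  exact w.2 hw

namespace Multigraph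

variable {V : Type} [Fintype V] [DecidableEq V] (G : Multigraph V)

def cut (s : Finset V) : ℕ := ∑ u ∈ s, ∑ v ∈ sᶜ, G.m u v

theorem cut_eq_sum_ite (s : Finset V) :
    G.cut s = ∑ u, ∑ v, if u ∈ s ∧ v ∉ s then G.m u v else 0 := by
  simp [cut, ite_and, Finset.sum_ite, Finset.filter_notMem_eq_sdiff, Finset.compl_eq_univ_sdiff]

theorem sum_sum_ite_iff_eq_two_mul_cut (s : Finset V) :
    (∑ u, ∑ v, if (u ∈ s ↔ v ∈ s) then 0 else G.m u v) = 2 * G.cut s := by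
  have hsplit : ∀ u v, (if (u ∈ s ↔ v ∈ s) then 0 else G.m u v) =
      (if u ∈ s ∧ v ∉ s then G.m u v else 0) + (if v ∈ s ∧ u ∉ s then G.m v u else 0) := by
    intro u v
    rw [G.symm v u]
    by_cases hu : u ∈ s <;> by_cases hv : v ∈ s <;> simp [hu, hv]
  simp only [hsplit, Finset.sum_add_distrib]
  rw [Finset.sum_comm (f := fun u v => if v ∈ s ∧ u ∉ s then G.m v u else 0), ← cut_eq_sum_ite,
    two_mul]

variable {N : Type} (T : SimpleGraph N) (b : V → N)

theorem linkCount_comm (x y : N) : G.linkCount T b x y = G.linkCount T b y x := by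
  rw [linkCount, linkCount, Sym2.eq_swap]

theorem linkCount_le_cut [DecidableEq N] {x y : N} (S : Finset N)
    (hS : ∀ a c, (a ∈ S ↔ c ∈ S) → (T.deleteEdges {s(x, y)}).Reachable a c) :
    G.linkCount T b x y ≤ G.cut {v | b v ∈ S} := by
  rw [linkCount, ← Nat.mul_div_cancel_left (G.cut _) two_pos, ← sum_sum_ite_iff_eq_two_mul_cut]
  refine Nat.div_le_div_right (Finset.sum_le_sum fun u _ => Finset.sum_le_sum fun v _ => ?_)
  by_cases hside : b u ∈ S ↔ b v ∈ S
  · simp [hS _ _ hside]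
  · simp only [Finset.mem_filter, Finset.mem_univ, true_and, hside, if_false]
    split <;> simp

theorem nodeCount_eq_card_of_reachable_induce [DecidableEq N] (hT : T.IsAcyclic) (n : N)
    (h : ∀ u v, 0 < G.m u v → ∀ (hu : b u ≠ n) (hv : b v ≠ n),
      (T.induce {n}ᶜ).Reachable ⟨b u, hu⟩ ⟨b v, hv⟩) :
    G.nodeCount T b n = #{v | b v = n} := by
  suffices htunnel : ∀ u v, (b u ≠ n ∧ b v ≠ n ∧
      ∃ p : T.Walk (b u) (b v), p.IsPath ∧ n ∈ p.support) → G.m u v = 0 by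
    rw [nodeCount, Finset.sum_eq_zero fun u _ => Finset.sum_eq_zero fun v _ => ?_, Nat.zero_div,
      add_zero]
    · congr
    · split_ifs with htun
      exacts [htunnel u v htun, rfl]
  rintro u v ⟨hu, hv, p, hp, hn⟩
  by_contra hm
  exact hT.notMem_support_of_reachable_induce hu hv (h u v (Nat.pos_of_ne_zero hm) hu hv) hp hn

theorem decompositionWidth_le {k : ℕ} (hlink : ∀ x y, T.Adj x y → G.linkCount T b x y ≤ k)
    (hnode : ∀ n, G.nodeCount T b n ≤ k) : G.decompositionWidth T b ≤ k := by
  refine csSup_le' ?_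
  rintro _ (⟨x, y, hxy, rfl⟩ | ⟨n, rfl⟩)
  exacts [hlink x y hxy, hnode n]

theorem screewidth_le_decompositionWidth {r : ℕ} {T : SimpleGraph (Fin r)} (hT : T.IsTree)
    (b : V → Fin r) : G.screewidth ≤ G.decompositionWidth T b :=
  Nat.sInf_le ⟨r, T, b, hT, rfl⟩

end Multigraph

instance (n : ℕ) : DecidableRel (pathGraph n).Adj :=
  fun _ _ => decidable_of_iff' _ pathGraph_adj

theorem pathGraph_three_isTree : (pathGraph 3).IsTree := by
  rw [isTree_iff_connected_and_card, Nat.card_eq_fintype_card, Nat.card_eq_fintype_card,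
    ← edgeFinset_card]
  exact ⟨pathGraph_connected 2, by decide⟩

def icosahedronBag : Fin 12 → Fin 3 := ![0, 0, 1, 1, 1, 1, 1, 1, 2, 1, 1, 2]

theorem icosahedronBag_eq_of_adj_of_ne_one : ∀ u v,
    0 < (Multigraph.ofSimpleGraph icosahedronGraph).m u v →
    icosahedronBag u ≠ 1 → icosahedronBag v ≠ 1 → icosahedronBag u = icosahedronBag v := by
  decide

theorem icosahedronBag_linkCount_le {x y : Fin 3} (hxy : (pathGraph 3).Adj x y) :
    (Multigraph.ofSimpleGraph icosahedronGraph).linkCount (pathGraph 3) icosahedronBag x y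
      ≤ 8 := by
  have h01 : (Multigraph.ofSimpleGraph icosahedronGraph).linkCount (pathGraph 3) icosahedronBag 0 1
      ≤ 8 := by
    refine (Multigraph.linkCount_le_cut _ _ _ {0} ?_).trans ?_
    · decide
    · decide
  have h12 : (Multigraph.ofSimpleGraph icosahedronGraph).linkCount (pathGraph 3) icosahedronBag 1 2
      ≤ 8 := by
    refine (Multigraph.linkCount_le_cut _ _ _ {2} ?_).trans ?_
    · decide
    · decide
  have hlinks : ∀ x y : Fin 3, (pathGraph 3).Adj x y →
      (x = 0 ∧ y = 1) ∨ (x = 1 ∧ y = 0) ∨ (x = 1 ∧ y = 2) ∨ (x = 2 ∧ y = 1) := by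
    decide
  rcases hlinks x y hxy with ⟨rfl, rfl⟩ | ⟨rfl, rfl⟩ | ⟨rfl, rfl⟩ | ⟨rfl, rfl⟩
  exacts [h01, (Multigraph.linkCount_comm _ _ _ _ _).trans_le h01, h12,
    (Multigraph.linkCount_comm _ _ _ _ _).trans_le h12]

theorem icosahedronBag_nodeCount_le (n : Fin 3) :
    (Multigraph.ofSimpleGraph icosahedronGraph).nodeCount (pathGraph 3) icosahedronBag n ≤ 8 := by
  rw [Multigraph.nodeCount_eq_card_of_reachable_induce _ _ _ pathGraph_three_isTree.isAcyclic n]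
  · revert n; decide
  intro u v huv hu hv
  fin_cases n
  · exact (show ((pathGraph 3).induce {0}ᶜ).Preconnected by decide) _ _
  · have hbag : icosahedronBag u = icosahedronBag v :=
      icosahedronBag_eq_of_adj_of_ne_one u v huv hu hv
    have hsub : (⟨_, hu⟩ : ↥({1}ᶜ : Set (Fin 3))) = ⟨_, hv⟩ := Subtype.ext hbag
    rw [hsub]
  · exact (show ((pathGraph 3).induce {2}ᶜ).Preconnected by decide) _ _

/-- The screewidth of the icosahedron graph is at most `8`. -/
theorem screewidth_icosahedron_le :
    (Multigraph.ofSimpleGraph icosahedronGraph).screewidth ≤ 8 :=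
  ((Multigraph.ofSimpleGraph icosahedronGraph).screewidth_le_decompositionWidth
    pathGraph_three_isTree icosahedronBag).trans
    (Multigraph.decompositionWidth_le _ _ _ (fun _ _ => icosahedronBag_linkCount_le)
      icosahedronBag_nodeCount_le)
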